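/- Fix a Laurent polynomial P in one variable, a prime p, and m ≥ max(deg P − 1, 0). Let T = {−m, …, m} and for n ∈ ℕ define the vector V(n) ∈ 𝔽_p^T by V(n)[i] = ct(P^n · x^i) mod p. Define the matrix γ(k) ∈ Mat_{T×T}(𝔽_p) by γ(k)[i][j] = ct(P^k · x^{i−pj}) mod p. Then for all n ∈ ℕ and all k ∈ {0, …, p−1}, γ(k) · V(n) = V(pn + k). -/

import Mathlib

open scoped Classical

/-- `Λ_p`: delete terms whose exponent is not divisible by `p` and substitute `x^p ↦ x`. -/
noncomputable def lam {R : Type*} [Semiring R] (p : ℕ) (hp : p ≠ 0) (Q : LaurentPolynomial R) :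
    LaurentPolynomial R :=
  AddMonoidAlgebra.ofCoeff (Finsupp.comapDomain (fun i : ℤ => (p : ℤ) * i) (AddMonoidAlgebra.coeff Q)
    ((mul_right_injective₀ (Int.natCast_ne_zero.mpr hp)).injOn))

/-- `substPow p Q = Q(x^p)`. -/
noncomputable def substPow {R : Type*} [Semiring R] (p : ℕ) (Q : LaurentPolynomial R) :
    LaurentPolynomial R :=
  AddMonoidAlgebra.ofCoeff (Finsupp.mapDomain (fun i : ℤ => (p : ℤ) * i) (AddMonoidAlgebra.coeff Q))

/-- The largest absolute value of an exponent with nonzero coefficient (`0` for `Q = 0`). -/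
noncomputable def ldeg {R : Type*} [Semiring R] (Q : LaurentPolynomial R) : ℕ :=
  (AddMonoidAlgebra.coeff Q).support.sup fun i => i.natAbs

/-- The exponent indexed by `i ∈ Fin (2m+1)`, running over `T = {−m, …, m}`. -/
def idx (m : ℕ) (i : Fin (2 * m + 1)) : ℤ := (i : ℤ) - m

/-- `V(n)[i] = ct(P^n · x^i) mod p`, the low-degree coefficients of `P^n`. -/
noncomputable def Vvec (p : ℕ) (P : LaurentPolynomial ℤ) (m : ℕ) (n : ℕ) :
    Fin (2 * m + 1) → ZMod p :=
  fun i => (((AddMonoidAlgebra.coeff (P ^ n)) (-(idx m i)) : ℤ) : ZMod p)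

/-- `γ(k)[i][j] = ct(P^k · x^{i − pj}) mod p`. -/
noncomputable def gam (p : ℕ) (P : LaurentPolynomial ℤ) (m : ℕ) (k : ℕ) :
    Matrix (Fin (2 * m + 1)) (Fin (2 * m + 1)) (ZMod p) :=
  fun i j => (((AddMonoidAlgebra.coeff (P ^ k)) ((p : ℤ) * idx m j - idx m i) : ℤ) : ZMod p)

/-! ### Auxiliary machinery -/

/-- Reduction of coefficients mod `p`, as a ring hom on Laurent polynomials. -/
noncomputable def phi (p : ℕ) : LaurentPolynomial ℤ →+* LaurentPolynomial (ZMod p) :=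
  AddMonoidAlgebra.liftNCRingHom
    ((AddMonoidAlgebra.singleZeroRingHom).comp (Int.castRingHom (ZMod p)))
    (AddMonoidAlgebra.of (ZMod p) ℤ) (fun _ _ => Commute.all _ _)

lemma phi_single (p : ℕ) (a : ℤ) (r : ℤ) :
    phi p (AddMonoidAlgebra.single a r) = AddMonoidAlgebra.single a ((r : ZMod p)) := by
  show AddMonoidAlgebra.liftNC _ _ _ = _
  rw [AddMonoidAlgebra.liftNC_single]
  show AddMonoidAlgebra.single (0:ℤ) ((r : ZMod p)) * AddMonoidAlgebra.single a 1 = _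
  rw [AddMonoidAlgebra.single_mul_single, zero_add, mul_one]

lemma phi_apply (p : ℕ) (Q : LaurentPolynomial ℤ) (e : ℤ) :
    AddMonoidAlgebra.coeff (phi p Q) e = ((AddMonoidAlgebra.coeff Q e : ℤ) : ZMod p) := by
  induction Q using AddMonoidAlgebra.induction_linear with
  | zero => simp
  | add f g hf hg => rw [map_add, AddMonoidAlgebra.coeff_add, Finsupp.add_apply, AddMonoidAlgebra.coeff_add, Finsupp.add_apply, hf, hg]; push_cast; ring
  | single a b =>
      rw [phi_single, AddMonoidAlgebra.coeff_single, AddMonoidAlgebra.coeff_single, Finsupp.single_apply, Finsupp.single_apply]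
      split <;> simp

lemma frob (p : ℕ) (hp : p.Prime) (Q : LaurentPolynomial (ZMod p)) :
    Q ^ p = substPow p Q := by
  haveI := Fact.mk hp
  haveI : CharP (LaurentPolynomial (ZMod p)) p :=
    charP_of_injective_algebraMap' (ZMod p) p
  haveI : ExpChar (LaurentPolynomial (ZMod p)) p := .prime hp
  conv_lhs => rw [← AddMonoidAlgebra.sum_coeff_single Q]
  rw [Finsupp.sum, sum_pow_char, substPow, Finsupp.mapDomain, Finsupp.sum, AddMonoidAlgebra.ofCoeff_sum]
  refine Finset.sum_congr rfl fun a _ => ?_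
  rw [AddMonoidAlgebra.single_pow, ZMod.pow_card, nsmul_eq_mul, AddMonoidAlgebra.ofCoeff_single]

lemma substPow_pow (p : ℕ) (Q : LaurentPolynomial (ZMod p)) (n : ℕ) :
    substPow p (Q ^ n) = (substPow p Q) ^ n := by
  have h : ∀ X : LaurentPolynomial (ZMod p), substPow p X
      = AddMonoidAlgebra.mapDomainRingHom (ZMod p) (AddMonoidHom.mulLeft (p:ℤ)) X :=
    fun X => rfl
  rw [h, h, map_pow]

lemma ldeg_mul_le {R : Type*} [Semiring R] (A B : LaurentPolynomial R) :
    ldeg (A * B) ≤ ldeg A + ldeg B := by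
  show (AddMonoidAlgebra.coeff (A * B)).support.sup (fun i => i.natAbs) ≤ _
  refine Finset.sup_le fun c hc => ?_
  have hmem := AddMonoidAlgebra.support_coeff_mul_subset A B hc
  rw [Finset.mem_add] at hmem
  obtain ⟨a, ha, b, hb, rfl⟩ := hmem
  calc (a + b).natAbs ≤ a.natAbs + b.natAbs := Int.natAbs_add_le a b
    _ ≤ ldeg A + ldeg B :=
      Nat.add_le_add (Finset.le_sup ha) (Finset.le_sup hb)

lemma ldeg_pow_le {R : Type*} [Semiring R] (Q : LaurentPolynomial R) (k : ℕ) :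
    ldeg (Q ^ k) ≤ k * ldeg Q := by
  induction k with
  | zero =>
      rw [pow_zero, Nat.zero_mul]
      show (AddMonoidAlgebra.coeff (1 : LaurentPolynomial R)).support.sup (fun i => i.natAbs) ≤ _
      refine Finset.sup_le fun b hb => ?_
      have hb' : b ∈ ({0} : Finset ℤ) := Finsupp.support_single_subset hb
      have : b = 0 := Finset.mem_singleton.mp hb'
      simp [this]
  | succ k ih =>
      calc ldeg (Q ^ (k+1)) = ldeg (Q ^ k * Q) := by rw [pow_succ]
        _ ≤ ldeg (Q ^ k) + ldeg Q := ldeg_mul_le _ _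
        _ ≤ k * ldeg Q + ldeg Q := Nat.add_le_add_right ih _
        _ = (k+1) * ldeg Q := by ring

lemma coeff_zero_of_big {R : Type*} [Semiring R] (Q : LaurentPolynomial R) (c : ℤ)
    (h : ldeg Q < c.natAbs) : AddMonoidAlgebra.coeff Q c = 0 := by
  by_contra hc
  have h2 : c.natAbs ≤ ldeg Q :=
    Finset.le_sup (f := fun i : ℤ => i.natAbs) (Finsupp.mem_support_iff.mpr hc)
  omega

lemma conv_apply (p : ℕ) (A B : LaurentPolynomial (ZMod p)) (e : ℤ) :
    AddMonoidAlgebra.coeff (substPow p A * B) e = ∑ b ∈ (AddMonoidAlgebra.coeff A).support, AddMonoidAlgebra.coeff A b * AddMonoidAlgebra.coeff B (e - (p:ℤ) * b) := by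
  rw [substPow, Finsupp.mapDomain, Finsupp.sum, AddMonoidAlgebra.ofCoeff_sum, Finset.sum_mul, AddMonoidAlgebra.coeff_sum, Finsupp.finset_sum_apply]
  refine Finset.sum_congr rfl fun b _ => ?_
  rw [AddMonoidAlgebra.ofCoeff_single, AddMonoidAlgebra.coeff_single_mul_apply, neg_add_eq_sub]

/-- `γ(k) · V(n) = V(pn + k)` for all `n ∈ ℕ` and digits `k < p`. -/
theorem stmt5 (p : ℕ) (hp : p.Prime) (P : LaurentPolynomial ℤ) (m : ℕ)
    (hm : ldeg P ≤ m + 1) :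
    ∀ n : ℕ, ∀ k < p, (gam p P m k).mulVec (Vvec p P m n) = Vvec p P m (p * n + k) := by
  intro n k hk
  haveI := Fact.mk hp
  funext i
  set Q : LaurentPolynomial (ZMod p) := phi p P with hQdef
  have hcoeff : ∀ (N : ℕ) (c : ℤ), (((AddMonoidAlgebra.coeff (P ^ N)) c : ℤ) : ZMod p) = AddMonoidAlgebra.coeff (Q ^ N) c := by
    intro N c
    rw [hQdef, ← map_pow, phi_apply]
  -- degree bound for Q
  have hQdeg : ldeg Q ≤ m + 1 := by
    refine le_trans (Finset.sup_le fun c hc => ?_) hm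
    refine Finset.le_sup (Finsupp.mem_support_iff.mpr fun h0 => ?_)
    rw [Finsupp.mem_support_iff, hQdef, phi_apply] at hc
    exact hc (by rw [h0]; exact Int.cast_zero)
  have hQkdeg : ldeg (Q ^ k) ≤ k * (m + 1) :=
    le_trans (ldeg_pow_le Q k) (Nat.mul_le_mul_left k hQdeg)
  -- vanishing of coefficients of Q^k far away
  have hvanish : ∀ c : ℤ, (k : ℤ) * (m + 1) < |c| → AddMonoidAlgebra.coeff (Q ^ k) c = 0 := by
    intro c hc
    refine coeff_zero_of_big _ c ?_
    have h1 : ((c.natAbs : ℤ)) = |c| := Int.natCast_natAbs c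
    have h2 : ((k * (m+1) : ℕ) : ℤ) = (k : ℤ) * (m + 1) := by push_cast; ring
    omega
  set e : ℤ := -(idx m i) with he
  have hebnd : -(m:ℤ) ≤ e ∧ e ≤ m := by
    have := i.isLt
    simp only [he, idx]
    omega
  -- the target index set
  set S : Finset ℤ := Finset.image (fun j : Fin (2*m+1) => -(idx m j)) Finset.univ with hS
  have hmem : ∀ b : ℤ, b ∈ S ↔ (-(m:ℤ) ≤ b ∧ b ≤ m) := by
    intro b
    simp only [hS, Finset.mem_image, Finset.mem_univ, true_and]
    constructor
    · rintro ⟨j, rfl⟩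
      have := j.isLt
      simp only [idx]
      omega
    · intro hb
      refine ⟨⟨(m - b).toNat, by omega⟩, ?_⟩
      simp only [idx]
      omega
  set A : LaurentPolynomial (ZMod p) := Q ^ n with hA
  set B : LaurentPolynomial (ZMod p) := Q ^ k with hB
  set F : ℤ → ZMod p := fun b => AddMonoidAlgebra.coeff A b * AddMonoidAlgebra.coeff B (e - (p:ℤ) * b) with hF
  -- vanishing of F off S
  have hFzero : ∀ b : ℤ, b ∉ S → AddMonoidAlgebra.coeff B (e - (p:ℤ) * b) = 0 := by
    intro b hb
    rw [hmem] at hb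
    rw [hB]
    refine hvanish _ ?_
    have hbabs : (m:ℤ) + 1 ≤ |b| := by
      rcases abs_cases b with ⟨h1, h2⟩ | ⟨h1, h2⟩ <;> omega
    have h1 : ((p:ℤ)) * ((m:ℤ)+1) ≤ |(p:ℤ) * b| := by
      rw [abs_mul, abs_of_nonneg (by positivity : (0:ℤ) ≤ (p:ℤ))]
      exact mul_le_mul_of_nonneg_left hbabs (by positivity)
    have h2 : |(p:ℤ) * b| - |e| ≤ |e - (p:ℤ) * b| := by
      rw [abs_sub_comm]
      exact (abs_sub_abs_le_abs_sub _ _)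
    have h3 : |e| ≤ m := abs_le.mpr hebnd
    have hkp : (k:ℤ) + 1 ≤ (p:ℤ) := by exact_mod_cast hk
    nlinarith [h1, h2, h3, hkp]
  -- compute RHS
  have hsplit : Q ^ (p * n + k) = substPow p A * B := by
    rw [pow_add, pow_mul, frob p hp, hA, hB, substPow_pow]
  have hRHS : AddMonoidAlgebra.coeff (Q ^ (p * n + k)) e = ∑ b ∈ (AddMonoidAlgebra.coeff A).support, F b := by
    rw [hsplit, conv_apply]
  -- move the sum to S
  have hstep1 : ∑ b ∈ (AddMonoidAlgebra.coeff A).support, F b = ∑ b ∈ (AddMonoidAlgebra.coeff A).support ∩ S, F b := by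
    refine (Finset.sum_subset Finset.inter_subset_left fun b hb hbn => ?_).symm
    have hbS : b ∉ S := fun hS' => hbn (Finset.mem_inter.mpr ⟨hb, hS'⟩)
    simp [hF, hFzero b hbS]
  have hstep2 : ∑ b ∈ (AddMonoidAlgebra.coeff A).support ∩ S, F b = ∑ b ∈ S, F b := by
    refine Finset.sum_subset Finset.inter_subset_right fun b hb hbn => ?_
    have hbA : b ∉ (AddMonoidAlgebra.coeff A).support := fun hA' => hbn (Finset.mem_inter.mpr ⟨hA', hb⟩)
    rw [Finsupp.notMem_support_iff] at hbA
    simp [hF, hbA]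
  have hinj : ∀ j1 ∈ (Finset.univ : Finset (Fin (2*m+1))), ∀ j2 ∈ Finset.univ,
      -(idx m j1) = -(idx m j2) → j1 = j2 := by
    intro j1 _ j2 _ h
    simp only [idx, neg_sub] at h
    exact Fin.ext (by omega)
  have hstep3 : ∑ b ∈ S, F b = ∑ j : Fin (2*m+1), F (-(idx m j)) := by
    rw [hS, Finset.sum_image hinj]
  -- finish
  show ∑ j, gam p P m k i j * Vvec p P m n j = Vvec p P m (p * n + k) i
  rw [Vvec, hcoeff, ← he, hRHS, hstep1, hstep2, hstep3]
  refine Finset.sum_congr rfl fun j _ => ?_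
  simp only [gam, Vvec, hF, hA, hB, hcoeff]
  rw [mul_comm]
  congr 2
  ring
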